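/- arXiv:1309.4341 — 2 statements merged into one kernel-verified Lean document; each statement's English description precedes it below -/
import Mathlib

section
/- Let m ≥ 3 be an odd integer. The assignment y₁ ↦ ₘ(x₁,x₂), y₂ ↦ x₁x₂ extends to a group isomorphism from the one-relator group ⟨y₁, y₂ ∣ y₁² = y₂^m⟩ onto the dihedral Artin group G(m). -/
/-- The alternating product `xyxy⋯` with `m` factors, starting with `x`. -/
def altProd {G : Type*} [Monoid G] : ℕ → G → G → G
  | 0, _, _ => 1
  | m + 1, x, y => x * altProd m y x

/-- The Artin relators associated to a Coxeter matrix `M` (with entries in `ℕ∞`):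
for each pair `i ≠ j` with `M i j = m` finite, the relator `ₘ(xᵢ,xⱼ) ₘ(xⱼ,xᵢ)⁻¹`. -/
def artinRels {n : ℕ} (M : Fin n → Fin n → ℕ∞) : Set (FreeGroup (Fin n)) :=
  { r | ∃ (i j : Fin n) (m : ℕ), i ≠ j ∧ M i j = (m : ℕ∞) ∧
        r = altProd m (FreeGroup.of i) (FreeGroup.of j) *
            (altProd m (FreeGroup.of j) (FreeGroup.of i))⁻¹ }

/-- The Artin group defined by the Coxeter matrix `M`. -/
abbrev ArtinGroup {n : ℕ} (M : Fin n → Fin n → ℕ∞) : Type := PresentedGroup (artinRels M)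

/-- The standard generators of the Artin group. -/
def agen {n : ℕ} (M : Fin n → Fin n → ℕ∞) (i : Fin n) : ArtinGroup M :=
  PresentedGroup.of i

/-- `M` is a Coxeter matrix of extra-large type: symmetric, `1` on the diagonal,
and all off-diagonal entries at least `4` (possibly `∞`). -/
structure IsXLMatrix {n : ℕ} (M : Fin n → Fin n → ℕ∞) : Prop where
  symm : ∀ i j, M i j = M j i
  diag : ∀ i, M i i = 1
  large : ∀ i j, i ≠ j → 4 ≤ M i j

/-- `M` is a Coxeter matrix of large type: symmetric, `1` on the diagonal,
and all off-diagonal entries at least `3` (possibly `∞`). -/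
structure IsLargeMatrix {n : ℕ} (M : Fin n → Fin n → ℕ∞) : Prop where
  symm : ∀ i j, M i j = M j i
  diag : ∀ i, M i i = 1
  large : ∀ i j, i ≠ j → 3 ≤ M i j

/-- The element of a group represented by a word over `X ∪ X⁻¹`, where a word is a list
of pairs `(i, ε)` with `ε = true` for the generator `x i` and `ε = false` for its inverse. -/
def wordProd {G : Type*} [Group G] {α : Type*} (x : α → G) (w : List (α × Bool)) : G :=
  (w.map fun p => if p.2 then x p.1 else (x p.1)⁻¹).prod

/-- The length `|g|` of `g`: the minimal length of a word over `X ∪ X⁻¹` representing `g`. -/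
noncomputable def wlen {G : Type*} [Group G] {α : Type*} (x : α → G) (g : G) : ℕ :=
  sInf { k | ∃ w : List (α × Bool), w.length = k ∧ wordProd x w = g }

/-- A word is geodesic if its length equals the length of the element it represents. -/
def IsGeodesicWord {G : Type*} [Group G] {α : Type*} (x : α → G) (w : List (α × Bool)) :
    Prop :=
  w.length = wlen x (wordProd x w)

/-- An element `g` is cyclically reduced if `|a g a⁻¹| ≥ |g|` for every letter
`a ∈ X ∪ X⁻¹`. -/
def CyclicallyReduced {G : Type*} [Group G] {α : Type*} (x : α → G) (g : G) : Prop :=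
  ∀ p : α × Bool, wlen x g ≤ wlen x (wordProd x [p] * g * (wordProd x [p])⁻¹)

/-- `d` is a left divisor of `g`: `|d| + |d⁻¹g| = |g|`. -/
def IsLeftDivisor {G : Type*} [Group G] {α : Type*} (x : α → G) (d g : G) : Prop :=
  wlen x d + wlen x (d⁻¹ * g) = wlen x g

/-- `d` is a right divisor of `g`: `|gd⁻¹| + |d| = |g|`. -/
def IsRightDivisor {G : Type*} [Group G] {α : Type*} (x : α → G) (d g : G) : Prop :=
  wlen x (g * d⁻¹) + wlen x d = wlen x g

/-- The Coxeter matrix of the dihedral Artin group `G(m)`. -/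
def Mdih (m : ℕ) : Fin 2 → Fin 2 → ℕ∞ := fun i j => if i = j then 1 else (m : ℕ∞)

/-- The dihedral Artin group `G(m) = ⟨x₁,x₂ ∣ ₘ(x₁,x₂) = ₘ(x₂,x₁)⟩`. -/
abbrev DihedralArtinGroup (m : ℕ) : Type := ArtinGroup (Mdih m)

lemma altProd_odd {G : Type*} [Monoid G] (k : ℕ) (x y : G) :
    altProd (2 * k + 1) x y = (x * y) ^ k * x := by
  induction k generalizing x y with
  | zero => simp [altProd]
  | succ n ih =>
      have : 2 * (n + 1) + 1 = (2 * n + 1) + 1 + 1 := by ring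
      rw [this, altProd, altProd, ih x y, pow_succ']
      group

lemma map_altProd {G H : Type*} [Monoid G] [Monoid H] (f : G →* H) (n : ℕ) (x y : G) :
    f (altProd n x y) = altProd n (f x) (f y) := by
  induction n generalizing x y with
  | zero => simp [altProd]
  | succ n ih => rw [altProd, altProd, map_mul, ih]

lemma presented_rel {α : Type*} {rels : Set (FreeGroup α)} {r : FreeGroup α} (hr : r ∈ rels) :
    PresentedGroup.mk rels r = 1 :=
  (QuotientGroup.eq_one_iff r).mpr (Subgroup.subset_normalClosure hr)

lemma pow_mul_shift {G : Type*} [Monoid G] (a b : G) (n : ℕ) :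
    a * (b * a) ^ n = (a * b) ^ n * a := by
  induction n with
  | zero => simp
  | succ n ih =>
      calc a * (b * a) ^ (n + 1) = (a * (b * a) ^ n) * (b * a) := by
            rw [pow_succ, mul_assoc]
        _ = (a * b) ^ n * a * (b * a) := by rw [ih]
        _ = (a * b) ^ (n + 1) * a := by
            rw [mul_assoc, ← mul_assoc a b a, ← mul_assoc, ← pow_succ]

lemma key_prod {G : Type*} [Monoid G] (a b : G) (k : ℕ) :
    ((a * b) ^ k * a) * ((b * a) ^ k * b) = (a * b) ^ (2 * k + 1) := by
  rw [two_mul, ← mul_assoc, mul_assoc ((a * b) ^ k), pow_mul_shift, ← mul_assoc, ← pow_add,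
    mul_assoc, ← pow_succ]

lemma conj_pow_aux {G : Type*} [Group G] (u v : G) (n : ℕ) :
    (u⁻¹ * v * u) ^ n = u⁻¹ * v ^ n * u := by
  induction n with
  | zero => group
  | succ n ih => rw [pow_succ, ih, pow_succ]; group


/-- For odd `m ≥ 3`, the assignment `y₁ ↦ ₘ(x₁,x₂)`, `y₂ ↦ x₁x₂` extends
to an isomorphism from `⟨y₁,y₂ ∣ y₁² = y₂^m⟩` onto the dihedral Artin group `G(m)`. -/
theorem dihedral_odd_presentation (m : ℕ) (hm : 3 ≤ m) (hmo : Odd m) :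
    ∃ φ : PresentedGroup
        ({FreeGroup.of (0 : Fin 2) ^ 2 * ((FreeGroup.of (1 : Fin 2)) ^ m)⁻¹} :
          Set (FreeGroup (Fin 2))) ≃* DihedralArtinGroup m,
      φ (PresentedGroup.of 0) = altProd m (agen (Mdih m) 0) (agen (Mdih m) 1) ∧
      φ (PresentedGroup.of 1) = agen (Mdih m) 0 * agen (Mdih m) 1 := by
  obtain ⟨k, hk⟩ := hmo
  subst hk
  set S : Set (FreeGroup (Fin 2)) :=
    {FreeGroup.of (0 : Fin 2) ^ 2 * ((FreeGroup.of (1 : Fin 2)) ^ (2 * k + 1))⁻¹} with hS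
  set y₁ : PresentedGroup S := PresentedGroup.of 0 with hy1
  set y₂ : PresentedGroup S := PresentedGroup.of 1 with hy2
  set x₁ : DihedralArtinGroup (2 * k + 1) := agen (Mdih (2 * k + 1)) 0 with hx1
  set x₂ : DihedralArtinGroup (2 * k + 1) := agen (Mdih (2 * k + 1)) 1 with hx2
  -- relation in the 1-relator group
  have hP : y₁ ^ 2 = y₂ ^ (2 * k + 1) := by
    have h := presented_rel (rels := S) (Set.mem_singleton _)
    simp only [map_mul, map_pow, map_inv] at h
    exact mul_inv_eq_one.mp h
  -- relation in the Artin group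
  have hD : (x₁ * x₂) ^ k * x₁ = (x₂ * x₁) ^ k * x₂ := by
    have hmem : altProd (2 * k + 1) (FreeGroup.of (0 : Fin 2)) (FreeGroup.of 1) *
        (altProd (2 * k + 1) (FreeGroup.of (1 : Fin 2)) (FreeGroup.of 0))⁻¹
          ∈ artinRels (Mdih (2 * k + 1)) :=
      ⟨0, 1, 2 * k + 1, by decide, by simp [Mdih], rfl⟩
    have h := presented_rel hmem
    simp only [map_mul, map_inv, map_altProd] at h
    have h' := mul_inv_eq_one.mp h
    rw [altProd_odd, altProd_odd] at h'
    exact h'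
  -- forward map
  set fφ : Fin 2 → DihedralArtinGroup (2 * k + 1) :=
    ![altProd (2 * k + 1) x₁ x₂, x₁ * x₂] with hfφ
  have hφrel : ∀ r ∈ S, FreeGroup.lift fφ r = 1 := by
    rintro r hr
    rw [hS, Set.mem_singleton_iff] at hr
    subst hr
    simp only [map_mul, map_pow, map_inv, FreeGroup.lift_apply_of, hfφ, Matrix.cons_val_zero,
      Matrix.cons_val_one, Matrix.head_cons]
    rw [mul_inv_eq_one, altProd_odd, sq]
    nth_rewrite 2 [hD]
    exact key_prod x₁ x₂ k
  -- backward map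
  set a : PresentedGroup S := (y₂ ^ k)⁻¹ * y₁ with ha
  set b : PresentedGroup S := y₁⁻¹ * y₂ ^ (k + 1) with hb
  have hab : a * b = y₂ := by rw [ha, hb]; group
  have hABa : altProd (2 * k + 1) a b = y₁ := by
    rw [altProd_odd, hab, ha]; group
  have hABb : altProd (2 * k + 1) b a = y₁ := by
    have hba : b * a = y₁⁻¹ * y₂ * y₁ := by rw [ha, hb]; group
    rw [altProd_odd, hba, conj_pow_aux, hb]
    have h2 : y₁ ^ 2 = y₂ ^ (k + (k + 1)) := by rw [hP]; congr 1; omega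
    calc y₁⁻¹ * y₂ ^ k * y₁ * (y₁⁻¹ * y₂ ^ (k + 1)) = y₁⁻¹ * y₂ ^ (k + (k + 1)) := by
          rw [pow_add]; group
      _ = y₁⁻¹ * y₁ ^ 2 := by rw [← h2]
      _ = y₁ := by group
  set fψ : Fin 2 → PresentedGroup S := ![a, b] with hfψ
  have hψrel : ∀ r ∈ artinRels (Mdih (2 * k + 1)), FreeGroup.lift fψ r = 1 := by
    rintro r ⟨i, j, m', hij, hMij, rfl⟩
    have hm' : m' = 2 * k + 1 := by
      have h0 : Mdih (2 * k + 1) i j = ((2 * k + 1 : ℕ) : ℕ∞) := by simp [Mdih, hij]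
      rw [h0] at hMij
      exact_mod_cast hMij.symm
    subst hm'
    simp only [map_mul, map_inv, map_altProd, FreeGroup.lift_apply_of]
    rw [mul_inv_eq_one]
    fin_cases i <;> fin_cases j <;>
      simp only [hfψ, Fin.zero_eta, Fin.mk_one, Fin.isValue, Matrix.cons_val_zero,
        Matrix.cons_val_one, Matrix.head_cons]
    · rw [hABa, hABb]
    · rw [hABa, hABb]
  set φ : PresentedGroup S →* DihedralArtinGroup (2 * k + 1) :=
    PresentedGroup.toGroup hφrel with hφdef
  set ψ : (DihedralArtinGroup (2 * k + 1)) →* PresentedGroup S :=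
    PresentedGroup.toGroup hψrel with hψdef
  have hφ0 : φ y₁ = altProd (2 * k + 1) x₁ x₂ := by
    show PresentedGroup.toGroup hφrel (PresentedGroup.of 0) = _
    rw [PresentedGroup.toGroup.of]
    simp [hfφ]
  have hφ1 : φ y₂ = x₁ * x₂ := by
    show PresentedGroup.toGroup hφrel (PresentedGroup.of 1) = _
    rw [PresentedGroup.toGroup.of]
    simp [hfφ]
  have hψ0 : ψ x₁ = a := by
    show PresentedGroup.toGroup hψrel (PresentedGroup.of 0) = _
    rw [PresentedGroup.toGroup.of]
    simp [hfψ]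
  have hψ1 : ψ x₂ = b := by
    show PresentedGroup.toGroup hψrel (PresentedGroup.of 1) = _
    rw [PresentedGroup.toGroup.of]
    simp [hfψ]
  have h₁ : ψ.comp φ = MonoidHom.id _ := by
    ext i
    fin_cases i
    · show ψ (φ y₁) = y₁
      rw [hφ0, map_altProd, hψ0, hψ1, hABa]
    · show ψ (φ y₂) = y₂
      rw [hφ1, map_mul, hψ0, hψ1, hab]
  have h₂ : φ.comp ψ = MonoidHom.id _ := by
    ext i
    fin_cases i
    · show φ (ψ x₁) = x₁
      rw [hψ0, ha, map_mul, map_inv, map_pow, hφ0, hφ1, altProd_odd]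
      group
    · show φ (ψ x₂) = x₂
      rw [hψ1, hb, map_mul, map_inv, map_pow, hφ0, hφ1, altProd_odd]
      group
  exact ⟨MonoidHom.toMulEquiv φ ψ h₁ h₂, hφ0, hφ1⟩
end

section
/- Let m ≥ 3 be an integer and let Z be the center of the dihedral Artin group G(m). If m is even, then G(m)/Z is isomorphic to the free product (ℤ/(m/2)ℤ) ∗ ℤ; if m is odd, then G(m)/Z is isomorphic to the free product (ℤ/2ℤ) ∗ (ℤ/mℤ). -/
/-!
Write `Δ = x₁x₂`. The relation makes `Δᴺ` central in `G(2N)` and `Δ²ᵏ⁺¹ = ((x₁x₂)ᵏx₁)²` central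
in `G(2k+1)`. Onto the free product `T` generated by `s` (of finite order) and `t`, send
`x₁ ↦ t, x₂ ↦ t⁻¹s` when `m = 2N`, and `x₁ ↦ t⁻ᵏs, x₂ ↦ s⁻¹tᵏ⁺¹` when `m = 2k+1`, so that `Δ ↦ s`
resp. `(x₁x₂)ᵏx₁ ↦ s, Δ ↦ t`. Sending `s, t` back to the classes of these elements modulo the
centre gives a left inverse on `G(m)/Z`, so the kernel lies in `Z`. Conversely, a free product of
two nontrivial groups is centreless, so the kernel of a surjection onto it contains `Z`.
-/

open Monoid Subgroup
open scoped Monoid.Coprod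

namespace Monoid.CoprodI.Word

variable {ι : Type*} {M : ι → Type*} [∀ i, Monoid (M i)]

def lastIdx (w : Word M) : Option ι :=
  w.toList.getLast?.map Sigma.fst

theorem fstIdx_eq_none_iff {w : Word M} : w.fstIdx = none ↔ w = empty := by
  rw [fstIdx, Option.map_eq_none_iff, List.head?_eq_none_iff, Word.ext_iff]
  rfl

theorem lastIdx_eq_none_iff {w : Word M} : w.lastIdx = none ↔ w = empty := by
  rw [lastIdx, Option.map_eq_none_iff, List.getLast?_eq_none_iff, Word.ext_iff]
  rfl

theorem lastIdx_cons {i} (m : M i) (w : Word M) (hmw : w.fstIdx ≠ some i) (h1 : m ≠ 1) :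
    (cons m w hmw h1).lastIdx = w.lastIdx.or (some i) := by
  cases h : w.toList.getLast? <;> simp [lastIdx, cons, List.getLast?_cons, h]

def concat (w : Word M) {i} (m : M i) (h1 : m ≠ 1) (hw : w.lastIdx ≠ some i) : Word M where
  toList := w.toList ++ [⟨i, m⟩]
  ne_one := by
    simp only [List.mem_append, List.mem_singleton]
    rintro l (hl | rfl)
    exacts [w.ne_one l hl, h1]
  chain_ne := w.chain_ne.append (List.isChain_singleton _) <| by
    rintro l hl _ ⟨⟩ rfl
    exact hw (by rw [lastIdx, Option.mem_def.1 hl]; rfl)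

theorem prod_concat (w : Word M) {i} (m : M i) (h1 : m ≠ 1) (hw : w.lastIdx ≠ some i) :
    (w.concat m h1 hw).prod = w.prod * of m := by
  simp [prod, concat]

theorem fstIdx_concat (w : Word M) {i} (m : M i) (h1 : m ≠ 1) (hw : w.lastIdx ≠ some i) :
    (w.concat m h1 hw).fstIdx = w.fstIdx.or (some i) := by
  cases h : w.toList.head? <;> simp [fstIdx, concat, h]

theorem prod_injective : Function.Injective (prod : Word M → CoprodI M) := by
  classical
  exact equiv.symm.injective

end Monoid.CoprodI.Word

namespace Monoid.CoprodI

open Word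

variable {ι : Type*} {G : ι → Type*} [∀ i, Group (G i)]

theorem Word.prod_notMem_center_of_fstIdx_eq_lastIdx {i j : ι} (hji : j ≠ i) [Nontrivial (G j)]
    (w : Word G) (hf : w.fstIdx = some i) (hl : w.lastIdx = some i) :
    w.prod ∉ Subgroup.center (CoprodI G) := by
  intro hw
  obtain ⟨h, h1⟩ := exists_ne (1 : G j)
  have hne : some i ≠ some j := by simpa using hji.symm
  have hcomm : (cons h w (hf ▸ hne) h1).prod = (w.concat h h1 (hl ▸ hne)).prod := by
    rw [prod_cons, prod_concat]
    exact Subgroup.mem_center_iff.1 hw (of h)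
  have := congrArg fstIdx (prod_injective hcomm)
  rw [fstIdx_cons, fstIdx_concat, hf] at this
  exact hne this.symm

theorem Word.prod_cons_notMem_center {i l : ι} (hli : l ≠ i) (a : G i) (u : Word G)
    (hu : u.fstIdx ≠ some i) (ha : a ≠ 1) (hl : u.lastIdx = some l) :
    (cons a u hu ha).prod ∉ Subgroup.center (CoprodI G) := by
  intro hw
  have hcomm : (u.concat a ha (by simpa [hl] using hli)).prod = (cons a u hu ha).prod := by
    have := Subgroup.mem_center_iff.1 hw (of a)
    rw [prod_cons, mul_assoc] at this
    rw [prod_concat, prod_cons, mul_left_cancel this]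
  obtain ⟨k, hk⟩ : ∃ k, u.fstIdx = some k :=
    Option.ne_none_iff_exists'.1 fun h => by
      simp [lastIdx_eq_none_iff.2 (fstIdx_eq_none_iff.1 h)] at hl
  have := congrArg fstIdx (prod_injective hcomm)
  rw [fstIdx_concat, fstIdx_cons, hk] at this
  exact hu (hk.trans this)

theorem center_eq_bot (hG : ∀ i, ∃ j ≠ i, Nontrivial (G j)) : Subgroup.center (CoprodI G) = ⊥ := by
  classical
  refine (Subgroup.eq_bot_iff_forall _).2 fun g hg => ?_
  obtain ⟨w, rfl⟩ : ∃ w : Word G, w.prod = g := ⟨equiv g, equiv.symm_apply_apply g⟩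
  induction w using consRecOn with
  | empty => exact prod_empty
  | cons i a u hu ha _ =>
    obtain ⟨j, hji, _⟩ := hG i
    by_cases hl : (cons a u hu ha).lastIdx = some i
    · exact absurd hg (prod_notMem_center_of_fstIdx_eq_lastIdx hji _ (fstIdx_cons ..) hl)
    · rw [lastIdx_cons] at hl
      obtain ⟨l, hl'⟩ : ∃ l, u.lastIdx = some l :=
        Option.ne_none_iff_exists'.1 fun h => by simp [h] at hl
      exact absurd hg (prod_cons_notMem_center (by simpa [hl'] using hl) a u hu ha hl')

end Monoid.CoprodI

theorem MonoidHom.map_mem_center_of_surjective {G H : Type*} [Group G] [Group H] {f : G →* H}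
    (hf : Function.Surjective f) {z : G} (hz : z ∈ center G) : f z ∈ center H := by
  rw [mem_center_iff] at hz ⊢
  intro h
  obtain ⟨g, rfl⟩ := hf h
  rw [← map_mul, hz, map_mul]

namespace Monoid.Coprod

theorem surjective_of_mem_range {A B K : Type*} [Group A] [Group B] [Group K]
    {a : A} {b : B} (ha : ∀ x, x ∈ zpowers a) (hb : ∀ y, y ∈ zpowers b) {f : K →* A ∗ B}
    (hfa : inl a ∈ f.range) (hfb : inr b ∈ f.range) : Function.Surjective f := by
  rw [← MonoidHom.range_eq_top, eq_top_iff, ← range_inl_sup_range_inr, sup_le_iff]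
  constructor
  · rintro _ ⟨x, rfl⟩
    obtain ⟨k, rfl⟩ := mem_zpowers_iff.1 (ha x)
    rw [map_zpow]
    exact zpow_mem hfa k
  · rintro _ ⟨y, rfl⟩
    obtain ⟨k, rfl⟩ := mem_zpowers_iff.1 (hb y)
    rw [map_zpow]
    exact zpow_mem hfb k

universe u

variable {A B : Type u} [Group A] [Group B]

instance : ∀ b, Group (cond b A B)
  | true => ‹Group A›
  | false => ‹Group B›

def mulEquivCoprodI : A ∗ B ≃* CoprodI (fun b => cond b A B) :=
  MonoidHom.toMulEquiv
    (lift (CoprodI.of (M := fun b => cond b A B) (i := true))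
      (CoprodI.of (M := fun b => cond b A B) (i := false)))
    (CoprodI.lift fun | true => inl | false => inr)
    (hom_ext (MonoidHom.ext fun x => by simp) (MonoidHom.ext fun x => by simp))
    (CoprodI.ext_hom _ _ fun
      | true => MonoidHom.ext fun x => by simp
      | false => MonoidHom.ext fun x => by simp)

theorem center_eq_bot [Nontrivial A] [Nontrivial B] : center (A ∗ B) = ⊥ := by
  have hI : center (CoprodI fun b => cond b A B) = ⊥ :=
    CoprodI.center_eq_bot fun
      | true => ⟨false, by decide, ‹Nontrivial B›⟩
      | false => ⟨true, by decide, ‹Nontrivial A›⟩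
  refine (Subgroup.eq_bot_iff_forall _).2 fun g hg => mulEquivCoprodI.map_eq_one_iff.1 ?_
  have := MonoidHom.map_mem_center_of_surjective (f := (mulEquivCoprodI : A ∗ B ≃* _).toMonoidHom)
    mulEquivCoprodI.surjective hg
  rwa [hI] at this

end Monoid.Coprod

theorem mem_zpowers_ofAdd_one {R : Type*} [Ring R] (hR : Function.Surjective (Int.cast : ℤ → R))
    (x : Multiplicative R) : x ∈ zpowers (Multiplicative.ofAdd 1) := by
  obtain ⟨k, hk⟩ := hR x.toAdd
  exact mem_zpowers_iff.2 ⟨k, by rw [← ofAdd_zsmul, zsmul_one, hk, ofAdd_toAdd]⟩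

theorem ofAdd_one_pow_self (n : ℕ) : Multiplicative.ofAdd (1 : ZMod n) ^ n = 1 := by
  rw [← ofAdd_nsmul, nsmul_one, ZMod.natCast_self, ofAdd_zero]

theorem orderOf_ofAdd_one (n : ℕ) : orderOf (Multiplicative.ofAdd (1 : ZMod n)) = n := by
  rw [orderOf_ofAdd_eq_addOrderOf, ZMod.addOrderOf_one]

theorem QuotientGroup.orderOf_mk_dvd {G : Type*} [Group G] {N : Subgroup G} [N.Normal] {g : G}
    {n : ℕ} (h : g ^ n ∈ N) : orderOf (g : G ⧸ N) ∣ n :=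
  orderOf_dvd_of_pow_eq_one (by rwa [← QuotientGroup.mk_pow, QuotientGroup.eq_one_iff])

theorem MonoidHom.ker_eq_center_of_surjective {G H : Type*} [Group G] [Group H] {φ : G →* H}
    (hφ : Function.Surjective φ) (hH : center H = ⊥) {ψ : H →* G ⧸ center G}
    (hψ : ψ.comp φ = QuotientGroup.mk' (center G)) : φ.ker = center G := by
  refine le_antisymm (fun g hg => ?_) (fun z hz => ?_)
  · rw [← QuotientGroup.eq_one_iff, ← QuotientGroup.mk'_apply, ← hψ, MonoidHom.comp_apply,
      MonoidHom.mem_ker.1 hg, map_one]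
  · have := MonoidHom.map_mem_center_of_surjective hφ hz
    rwa [hH, mem_bot] at this

noncomputable def QuotientGroup.quotientCenterMulEquiv {G H : Type*} [Group G] [Group H]
    (φ : G →* H) (hφ : Function.Surjective φ) (hH : center H = ⊥) (ψ : H →* G ⧸ center G)
    (hψ : ψ.comp φ = QuotientGroup.mk' (center G)) : G ⧸ center G ≃* H :=
  (quotientMulEquivOfEq (φ.ker_eq_center_of_surjective hφ hH hψ).symm).trans
    (quotientKerEquivOfSurjective φ hφ)

section altProd

variable {M N : Type*} [Monoid M] [Monoid N]

theorem altProd_succ (n : ℕ) (a b : M) : altProd (n + 1) a b = a * altProd n b a := rfl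

theorem altProd_two_mul (k : ℕ) (a b : M) : altProd (2 * k) a b = (a * b) ^ k := by
  induction k with
  | zero => rw [Nat.mul_zero, pow_zero]; rfl
  | succ k ih => rw [Nat.mul_succ, altProd_succ, altProd_succ, ih, pow_succ', mul_assoc]

theorem altProd_two_mul_add_one (k : ℕ) (a b : M) :
    altProd (2 * k + 1) a b = (a * b) ^ k * a := by
  rw [altProd_succ, altProd_two_mul, mul_pow_mul]

theorem map_altProd_s5 (f : M →* N) (n : ℕ) (a b : M) :
    f (altProd n a b) = altProd n (f a) (f b) := by
  induction n generalizing a b with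
  | zero => exact map_one f
  | succ n ih => rw [altProd_succ, altProd_succ, map_mul, ih]

theorem commute_mul_pow_of_mul_pow_eq {a b : M} {k : ℕ} (h : (a * b) ^ k = (b * a) ^ k) :
    Commute a ((a * b) ^ k) ∧ Commute b ((a * b) ^ k) := by
  constructor
  · rw [commute_iff_eq, mul_pow_mul, h]
  · rw [commute_iff_eq, h, mul_pow_mul, h]

theorem sq_mul_pow_mul_of_eq {a b : M} {k : ℕ} (h : (a * b) ^ k * a = (b * a) ^ k * b) :
    ((a * b) ^ k * a) ^ 2 = (a * b) ^ (2 * k + 1) := by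
  rw [pow_two]
  nth_rw 2 [h]
  rw [mul_assoc ((a * b) ^ k), ← mul_assoc a, ← mul_pow_mul, pow_succ, two_mul, pow_add]
  simp only [mul_assoc]

theorem commute_mul_pow_of_mul_pow_mul_eq {a b : M} {k : ℕ}
    (h : (a * b) ^ k * a = (b * a) ^ k * b) :
    Commute a ((a * b) ^ (2 * k + 1)) ∧ Commute b ((a * b) ^ (2 * k + 1)) := by
  have h₁ : a * ((a * b) ^ k * a) = (a * b) ^ k * a * b := by
    conv_lhs => rw [h]
    rw [← mul_assoc, ← mul_pow_mul]
  have h₂ : b * ((a * b) ^ k * a) = (a * b) ^ k * a * a := by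
    conv_rhs => rw [h]
    rw [← mul_assoc, ← mul_pow_mul]
  rw [← sq_mul_pow_mul_of_eq h, pow_two]
  generalize (a * b) ^ k * a = A at h₁ h₂
  constructor
  · rw [commute_iff_eq, ← mul_assoc, h₁, mul_assoc, h₂, mul_assoc]
  · rw [commute_iff_eq, ← mul_assoc, h₂, mul_assoc, h₁, mul_assoc]

theorem altProd_two_mul_eq_of_pow_eq_one {G : Type*} [Group G] {s t : G} {N : ℕ}
    (hs : s ^ N = 1) : altProd (2 * N) t (t⁻¹ * s) = altProd (2 * N) (t⁻¹ * s) t := by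
  have hconj : (t⁻¹ * s * t) ^ N = 1 := by
    simpa [hs] using conj_pow (a := t⁻¹) (b := s) (i := N)
  rw [altProd_two_mul, altProd_two_mul, mul_inv_cancel_left, hs, hconj]

theorem altProd_two_mul_add_one_eq_of_pow_eq_one {G : Type*} [Group G] {s t : G} {k : ℕ}
    (hs : s ^ 2 = 1) (ht : t ^ (2 * k + 1) = 1) :
    altProd (2 * k + 1) ((t ^ k)⁻¹ * s) (s⁻¹ * t ^ (k + 1)) =
      altProd (2 * k + 1) (s⁻¹ * t ^ (k + 1)) ((t ^ k)⁻¹ * s) := by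
  have hab : (t ^ k)⁻¹ * s * (s⁻¹ * t ^ (k + 1)) = t := by group
  have hba : s⁻¹ * t ^ (k + 1) * ((t ^ k)⁻¹ * s) = s⁻¹ * t * s := by group
  have hconj : (s⁻¹ * t * s) ^ k = s⁻¹ * t ^ k * s := by
    simpa using conj_pow (a := s⁻¹) (b := t) (i := k)
  have hs' : s⁻¹ = s := inv_eq_of_mul_eq_one_right (by rw [← pow_two, hs])
  rw [altProd_two_mul_add_one, altProd_two_mul_add_one, hab, hba, hconj, mul_inv_cancel_left,
    show s⁻¹ * t ^ k * s * (s⁻¹ * t ^ (k + 1)) = s⁻¹ * t ^ (2 * k + 1) by group, ht, mul_one, hs']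

end altProd

namespace DihedralArtinGroup

variable {m : ℕ}

def x₁ : DihedralArtinGroup m := agen (Mdih m) 0

def x₂ : DihedralArtinGroup m := agen (Mdih m) 1

theorem altProd_x₁_x₂ : altProd m (x₁ : DihedralArtinGroup m) x₂ = altProd m x₂ x₁ := by
  have hrel : altProd m (FreeGroup.of 0) (FreeGroup.of 1) *
      (altProd m (FreeGroup.of 1) (FreeGroup.of 0))⁻¹ ∈ artinRels (Mdih m) :=
    ⟨0, 1, m, by decide, by simp [Mdih], rfl⟩
  have := (QuotientGroup.eq_one_iff _).2 (subset_normalClosure hrel)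
  change PresentedGroup.mk _ _ = 1 at this
  rwa [map_mul, map_inv, map_altProd_s5, map_altProd_s5, mul_inv_eq_one] at this

theorem lift_artinRels_eq_one {T : Type*} [Group T] {a b : T} (h : altProd m a b = altProd m b a) :
    ∀ r ∈ artinRels (Mdih m), FreeGroup.lift ![a, b] r = 1 := by
  rintro _ ⟨i, j, n, hij, hn, rfl⟩
  obtain rfl : n = m := by simpa [Mdih, hij] using hn.symm
  rw [map_mul, map_inv, map_altProd_s5, map_altProd_s5, FreeGroup.lift_apply_of,
    FreeGroup.lift_apply_of, mul_inv_eq_one]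
  fin_cases i <;> fin_cases j <;> simp_all

def lift {T : Type*} [Group T] (a b : T) (h : altProd m a b = altProd m b a) :
    DihedralArtinGroup m →* T :=
  PresentedGroup.toGroup (lift_artinRels_eq_one h)

variable {T : Type*} [Group T]

@[simp]
theorem lift_x₁ {a b : T} (h : altProd m a b = altProd m b a) : lift a b h x₁ = a :=
  PresentedGroup.toGroup.of _

@[simp]
theorem lift_x₂ {a b : T} (h : altProd m a b = altProd m b a) : lift a b h x₂ = b :=
  PresentedGroup.toGroup.of _

@[ext]
theorem hom_ext {f g : DihedralArtinGroup m →* T} (h₁ : f x₁ = g x₁) (h₂ : f x₂ = g x₂) : f = g :=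
  PresentedGroup.ext fun i => by fin_cases i; exacts [h₁, h₂]

theorem mem_center_iff {z : DihedralArtinGroup m} :
    z ∈ center (DihedralArtinGroup m) ↔ Commute x₁ z ∧ Commute x₂ z := by
  rw [center_eq_iInf (PresentedGroup.closure_range_of _)]
  simp only [mem_iInf, Set.mem_range, Fin.exists_fin_two, mem_centralizer_singleton_iff]
  simp [or_imp, forall_and, commute_iff_eq, x₁, x₂, agen, eq_comm]

theorem rel_two_mul (N : ℕ) :
    (x₁ * x₂ : DihedralArtinGroup (2 * N)) ^ N = (x₂ * x₁) ^ N := by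
  simpa only [altProd_two_mul] using altProd_x₁_x₂ (m := 2 * N)

theorem rel_two_mul_add_one (k : ℕ) :
    (x₁ * x₂ : DihedralArtinGroup (2 * k + 1)) ^ k * x₁ = (x₂ * x₁) ^ k * x₂ := by
  simpa only [altProd_two_mul_add_one] using altProd_x₁_x₂ (m := 2 * k + 1)

theorem mul_pow_mem_center_two_mul (N : ℕ) :
    (x₁ * x₂ : DihedralArtinGroup (2 * N)) ^ N ∈ center (DihedralArtinGroup (2 * N)) :=
  mem_center_iff.2 (commute_mul_pow_of_mul_pow_eq (rel_two_mul N))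

theorem mul_pow_mem_center_two_mul_add_one (k : ℕ) :
    (x₁ * x₂ : DihedralArtinGroup (2 * k + 1)) ^ (2 * k + 1) ∈
      center (DihedralArtinGroup (2 * k + 1)) :=
  mem_center_iff.2 (commute_mul_pow_of_mul_pow_mul_eq (rel_two_mul_add_one k))

theorem nonempty_quotient_center_mulEquiv_of_even (N : ℕ) (hN : 2 ≤ N) :
    Nonempty ((DihedralArtinGroup (2 * N) ⧸ center (DihedralArtinGroup (2 * N))) ≃*
      Multiplicative (ZMod N) ∗ Multiplicative ℤ) := by
  have : Fact (1 < N) := ⟨hN⟩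
  set s : Multiplicative (ZMod N) ∗ Multiplicative ℤ := Coprod.inl (.ofAdd 1)
  set t : Multiplicative (ZMod N) ∗ Multiplicative ℤ := Coprod.inr (.ofAdd 1)
  have hs : s ^ N = 1 := by rw [← map_pow, ofAdd_one_pow_self, map_one]
  set φ := lift t (t⁻¹ * s) (altProd_two_mul_eq_of_pow_eq_one hs)
  have hφ : Function.Surjective φ :=
    Coprod.surjective_of_mem_range (mem_zpowers_ofAdd_one ZMod.intCast_surjective)
      (mem_zpowers_ofAdd_one fun k => ⟨k, Int.cast_id⟩)
      ⟨x₁ * x₂, by simp [φ, s]⟩ ⟨x₁, by simp [φ, t]⟩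
  set q : DihedralArtinGroup (2 * N) ⧸ center _ := QuotientGroup.mk (x₁ * x₂)
  have hq : orderOf q ∣ orderOf (Multiplicative.ofAdd (1 : ZMod N)) := by
    rw [orderOf_ofAdd_one]
    exact QuotientGroup.orderOf_mk_dvd (mul_pow_mem_center_two_mul N)
  set ψ := Coprod.lift
    (monoidHomOfForallMemZpowers (mem_zpowers_ofAdd_one ZMod.intCast_surjective) hq)
    (zpowersHom _ (x₁ : DihedralArtinGroup (2 * N)))
  have hψ : ψ.comp φ = QuotientGroup.mk' _ := by
    ext <;> simp [φ, ψ, q, s, t]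
  exact ⟨QuotientGroup.quotientCenterMulEquiv φ hφ Coprod.center_eq_bot ψ hψ⟩

theorem nonempty_quotient_center_mulEquiv_of_odd (k : ℕ) (hk : 1 ≤ k) :
    Nonempty ((DihedralArtinGroup (2 * k + 1) ⧸ center (DihedralArtinGroup (2 * k + 1))) ≃*
      Multiplicative (ZMod 2) ∗ Multiplicative (ZMod (2 * k + 1))) := by
  have : Fact (1 < 2 * k + 1) := ⟨by omega⟩
  set s : Multiplicative (ZMod 2) ∗ Multiplicative (ZMod (2 * k + 1)) := Coprod.inl (.ofAdd 1)
  set t : Multiplicative (ZMod 2) ∗ Multiplicative (ZMod (2 * k + 1)) := Coprod.inr (.ofAdd 1)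
  have hs : s ^ 2 = 1 := by rw [← map_pow, ofAdd_one_pow_self, map_one]
  have ht : t ^ (2 * k + 1) = 1 := by rw [← map_pow, ofAdd_one_pow_self, map_one]
  set φ := lift ((t ^ k)⁻¹ * s) (s⁻¹ * t ^ (k + 1)) (altProd_two_mul_add_one_eq_of_pow_eq_one hs ht)
  have hφ₁₂ : φ (x₁ * x₂) = t := by
    simp only [φ, map_mul, lift_x₁, lift_x₂]
    group
  have hφ : Function.Surjective φ :=
    Coprod.surjective_of_mem_range (mem_zpowers_ofAdd_one ZMod.intCast_surjective)
      (mem_zpowers_ofAdd_one ZMod.intCast_surjective)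
      ⟨(x₁ * x₂) ^ k * x₁, by rw [map_mul, map_pow, hφ₁₂]; simp [φ, s]⟩ ⟨x₁ * x₂, hφ₁₂⟩
  set p : DihedralArtinGroup (2 * k + 1) ⧸ center _ := QuotientGroup.mk ((x₁ * x₂) ^ k * x₁)
  set q : DihedralArtinGroup (2 * k + 1) ⧸ center _ := QuotientGroup.mk (x₁ * x₂)
  have hp : orderOf p ∣ orderOf (Multiplicative.ofAdd (1 : ZMod 2)) := by
    rw [orderOf_ofAdd_one]
    refine QuotientGroup.orderOf_mk_dvd ?_
    rw [sq_mul_pow_mul_of_eq (rel_two_mul_add_one k)]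
    exact mul_pow_mem_center_two_mul_add_one k
  have hq : orderOf q ∣ orderOf (Multiplicative.ofAdd (1 : ZMod (2 * k + 1))) := by
    rw [orderOf_ofAdd_one]
    exact QuotientGroup.orderOf_mk_dvd (mul_pow_mem_center_two_mul_add_one k)
  set ψ := Coprod.lift
    (monoidHomOfForallMemZpowers (mem_zpowers_ofAdd_one ZMod.intCast_surjective) hp)
    (monoidHomOfForallMemZpowers (mem_zpowers_ofAdd_one ZMod.intCast_surjective) hq)
  have hψ : ψ.comp φ = QuotientGroup.mk' _ := by
    ext <;> simp [φ, ψ, p, q, s, t, pow_succ, mul_assoc]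
  exact ⟨QuotientGroup.quotientCenterMulEquiv φ hφ Coprod.center_eq_bot ψ hψ⟩

end DihedralArtinGroup

/-- For `m ≥ 3` and `Z` the center of `G(m)`: if `m` is even then
`G(m)/Z ≅ C_{m/2} ∗ C_∞`, and if `m` is odd then `G(m)/Z ≅ C₂ ∗ C_m`. -/
theorem dihedral_central_quotient (m : ℕ) (hm : 3 ≤ m) :
    (Even m → Nonempty
      ((DihedralArtinGroup m ⧸ Subgroup.center (DihedralArtinGroup m)) ≃*
        Monoid.Coprod (Multiplicative (ZMod (m / 2))) (Multiplicative ℤ))) ∧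
    (Odd m → Nonempty
      ((DihedralArtinGroup m ⧸ Subgroup.center (DihedralArtinGroup m)) ≃*
        Monoid.Coprod (Multiplicative (ZMod 2)) (Multiplicative (ZMod m)))) := by
  refine ⟨fun ⟨N, hN⟩ => ?_, fun ⟨k, hk⟩ => ?_⟩
  · obtain rfl : m = 2 * N := by omega
    rw [Nat.mul_div_cancel_left N two_pos]
    exact DihedralArtinGroup.nonempty_quotient_center_mulEquiv_of_even N (by omega)
  · subst hk
    exact DihedralArtinGroup.nonempty_quotient_center_mulEquiv_of_odd k (by omega)
end
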